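/- arXiv:2310.18624 — 5 statements merged into one kernel-verified Lean document; each statement's English description precedes it below -/
import Mathlib

section
/- Let c ∈ ℝ^d and let y_1, …, y_k ∈ ℝ^d be points with ‖y_i − c‖ ≤ 1 for all i. Then the closed 1-neighborhood of the convex hull of {y_1, …, y_k} is contained in the union of the closed balls B(y_i, √2); that is, every point y ∈ ℝ^d whose distance from conv{y_1, …, y_k} is at most 1 satisfies ‖y − y_i‖ ≤ √2 for some index i. -/
/-!
Let `x` be a point of the hull nearest to `z`, so `‖z - x‖ ≤ 1`. The function
`u ↦ ‖z - u‖² - ‖c - u‖² = ‖z‖² - ‖c‖² - 2⟪z - c, u⟫` is affine, hence on the hull it is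
minimised at some vertex `y_i`. Therefore
`‖z - y_i‖² ≤ ‖z - x‖² + ‖c - y_i‖² - ‖c - x‖² ≤ 1 + 1`.
-/

open Metric

section
variable {E : Type*} [NormedAddCommGroup E] [InnerProductSpace ℝ E]

lemma norm_sub_sq_sub_norm_sub_sq (z c u : E) :
    ‖z - u‖ ^ 2 - ‖c - u‖ ^ 2 = ‖z‖ ^ 2 - ‖c‖ ^ 2 - 2 * inner ℝ (z - c) u := by
  rw [norm_sub_sq_real, norm_sub_sq_real, inner_sub_left]
  ring

lemma exists_norm_sub_sq_sub_norm_sub_sq_le_of_mem_convexHull {t : Set E} {x : E}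
    (hx : x ∈ convexHull ℝ t) (z c : E) :
    ∃ y ∈ t, ‖z - y‖ ^ 2 - ‖c - y‖ ^ 2 ≤ ‖z - x‖ ^ 2 - ‖c - x‖ ^ 2 := by
  obtain ⟨y, hyt, hy⟩ := ((innerSL ℝ (z - c)).toLinearMap.convexOn
    convex_univ).exists_ge_of_mem_convexHull (Set.subset_univ t) hx
  refine ⟨y, hyt, ?_⟩
  simp only [ContinuousLinearMap.coe_coe, innerSL_apply_apply] at hy
  rw [norm_sub_sq_sub_norm_sub_sq, norm_sub_sq_sub_norm_sub_sq]
  linarith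

lemma exists_dist_le_sqrt_of_mem_convexHull {t : Set E} {c x z : E} {r s : ℝ}
    (ht : t ⊆ closedBall c r) (hx : x ∈ convexHull ℝ t) (hzx : dist z x ≤ s) :
    ∃ y ∈ t, dist z y ≤ √(s ^ 2 + r ^ 2) := by
  obtain ⟨y, hyt, hy⟩ := exists_norm_sub_sq_sub_norm_sub_sq_le_of_mem_convexHull hx z c
  refine ⟨y, hyt, Real.le_sqrt_of_sq_le ?_⟩
  have hcy : dist c y ≤ r := by rw [dist_comm]; exact ht hyt
  rw [dist_eq_norm] at hzx hcy ⊢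
  nlinarith [norm_nonneg (z - x), norm_nonneg (c - y), norm_nonneg (c - x)]

lemma exists_dist_le_sqrt_of_infDist_convexHull_le {t : Set E} {c z : E} {r s : ℝ}
    (htf : t.Finite) (hne : t.Nonempty) (ht : t ⊆ closedBall c r)
    (hz : infDist z (convexHull ℝ t) ≤ s) :
    ∃ y ∈ t, dist z y ≤ √(s ^ 2 + r ^ 2) := by
  obtain ⟨x, hx, hzx⟩ := (htf.isCompact_convexHull ℝ).exists_infDist_eq_dist
    (hne.mono (subset_convexHull ℝ t)) z
  exact exists_dist_le_sqrt_of_mem_convexHull ht hx (hzx ▸ hz)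

end

theorem stmt5 (d k : ℕ) (hk : 0 < k) (c : EuclideanSpace ℝ (Fin d))
    (y : Fin k → EuclideanSpace ℝ (Fin d))
    (hy : ∀ i, ‖y i - c‖ ≤ 1)
    (z : EuclideanSpace ℝ (Fin d))
    (hz : Metric.infDist z (convexHull ℝ (Set.range y)) ≤ 1) :
    ∃ i, ‖z - y i‖ ≤ Real.sqrt 2 := by
  have : Nonempty (Fin k) := ⟨⟨0, hk⟩⟩
  have hball : Set.range y ⊆ closedBall c 1 := by
    rintro _ ⟨i, rfl⟩
    simpa [dist_eq_norm] using hy i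
  obtain ⟨_, ⟨i, rfl⟩, hi⟩ := exists_dist_le_sqrt_of_infDist_convexHull_le
    (Set.finite_range y) (Set.range_nonempty y) hball hz
  exact ⟨i, by simpa [dist_eq_norm, one_add_one_eq_two] using hi⟩
end

section
/- If X ⊆ ℝ^d is 1-dense, then there exists a continuous function g : ℝ^d → ℝ^d such that for every c ∈ ℝ^d, the point g(c) lies in the convex hull of X ∩ B(c, 1), where B(c,1) is the closed unit ball centered at c. -/
/-- A set `X ⊆ ℝ^d` is 1-dense if every point of `ℝ^d` is at distance `< 1` from `X`. -/
def IsOneDense {d : ℕ} (X : Set (EuclideanSpace ℝ (Fin d))) : Prop :=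
  ∀ y : EuclideanSpace ℝ (Fin d), ∃ x ∈ X, ‖y - x‖ < 1

theorem stmt8 (d : ℕ) (X : Set (EuclideanSpace ℝ (Fin d))) (hX : IsOneDense X) :
    ∃ g : EuclideanSpace ℝ (Fin d) → EuclideanSpace ℝ (Fin d),
      Continuous g ∧
      ∀ c, g c ∈ convexHull ℝ (X ∩ Metric.closedBall c 1) := by
  have hUo : ∀ x : X, IsOpen (Metric.ball (x : EuclideanSpace ℝ (Fin d)) 1) :=
    fun x => Metric.isOpen_ball
  have hcov : (Set.univ : Set (EuclideanSpace ℝ (Fin d))) ⊆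
      ⋃ i : X, Metric.ball (i : EuclideanSpace ℝ (Fin d)) 1 := by
    intro c _
    obtain ⟨x, hxX, hx⟩ := hX c
    exact Set.mem_iUnion.2 ⟨⟨x, hxX⟩, by simpa [Metric.mem_ball, dist_eq_norm] using hx⟩
  obtain ⟨f, hf⟩ := PartitionOfUnity.exists_isSubordinate (ι := X)
    (X := EuclideanSpace ℝ (Fin d)) isClosed_univ
    (fun x : X => Metric.ball (x : EuclideanSpace ℝ (Fin d)) 1) hUo hcov
  refine ⟨fun c => ∑ᶠ i : X, f i c • (i : EuclideanSpace ℝ (Fin d)), ?_, ?_⟩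
  · exact hf.continuous_finsum_smul hUo fun i => continuousOn_const
  · intro c
    refine f.finsum_smul_mem_convex (g := fun i _ => (i : EuclideanSpace ℝ (Fin d)))
      (Set.mem_univ c) (fun i hi => ?_) (convex_convexHull ℝ _)
    apply subset_convexHull ℝ _
    have hmem : c ∈ tsupport (f i) := subset_closure (by simpa using hi)
    have hball := hf i hmem
    refine ⟨i.2, ?_⟩
    rw [Metric.mem_closedBall, dist_comm]
    exact le_of_lt (by simpa using hball)
end

section
/- Let R > 0 and let f : B(0, R) → ℝ^d be a continuous function defined on the closed ball of radius R centered at the origin such that f(x) = x for every x with ‖x‖ = R. Then there exists x ∈ B(0, R) with f(x) = 0; that is, the origin lies in the image of f. -/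
set_option maxHeartbeats 1000000

open Metric MeasureTheory Set Polynomial

noncomputable section BrouwerAux

variable {d : ℕ}

local notation "E" => EuclideanSpace ℝ (Fin d)

/-- The subalgebra of continuous functions on a set that are restrictions of smooth global
functions. -/
def smoothRestrict (s : Set (EuclideanSpace ℝ (Fin d))) : Subalgebra ℝ C(s, ℝ) where
  carrier := {F | ∃ g : EuclideanSpace ℝ (Fin d) → ℝ, ContDiff ℝ (⊤ : ℕ∞) g ∧ ∀ x : s, F x = g x}
  mul_mem' := by
    rintro a b ⟨g, hg, hga⟩ ⟨h, hh, hhb⟩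
    exact ⟨g * h, hg.mul hh, fun x => by simp [hga x, hhb x]⟩
  add_mem' := by
    rintro a b ⟨g, hg, hga⟩ ⟨h, hh, hhb⟩
    exact ⟨g + h, hg.add hh, fun x => by simp [hga x, hhb x]⟩
  algebraMap_mem' := fun r => ⟨fun _ => r, contDiff_const, fun x => rfl⟩

lemma smoothRestrict_separates (s : Set (EuclideanSpace ℝ (Fin d))) :
    (smoothRestrict s).SeparatesPoints := by
  intro x y hxy
  refine ⟨_, ⟨ContinuousMap.mk (fun z : s => @inner ℝ _ _ ((x:E) - y) (z:E))
    (by exact (continuous_const.inner continuous_subtype_val)), ⟨fun z => @inner ℝ _ _ ((x:E) - y) z, ?_, fun z => rfl⟩, rfl⟩, ?_⟩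
  · exact (innerSL ℝ ((x:E) - (y:E))).contDiff
  · simp only [ContinuousMap.coe_mk]
    intro h
    have : @inner ℝ _ _ ((x:E) - y) ((x:E) - y) = 0 := by
      rw [inner_sub_right]; rw [sub_eq_zero]; exact h
    rw [real_inner_self_eq_norm_sq] at this
    have : (x:E) = y := by
      have := (pow_eq_zero_iff (n := 2) (by norm_num)).1 this
      rwa [norm_sub_eq_zero_iff] at this
    exact hxy (Subtype.ext this)

lemma smooth_approx (φ : EuclideanSpace ℝ (Fin d) → EuclideanSpace ℝ (Fin d))
    (hφ : ContinuousOn φ (closedBall 0 1)) {ε : ℝ} (hε : 0 < ε) :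
    ∃ p : EuclideanSpace ℝ (Fin d) → EuclideanSpace ℝ (Fin d),
      ContDiff ℝ (⊤ : ℕ∞) p ∧ ∀ x ∈ closedBall (0:EuclideanSpace ℝ (Fin d)) 1, ‖p x - φ x‖ < ε := by
  haveI : CompactSpace (closedBall (0:EuclideanSpace ℝ (Fin d)) 1) :=
    isCompact_iff_compactSpace.1 (isCompact_closedBall _ _)
  set δ := ε / (d + 1) with hδdef
  have hδ : 0 < δ := by positivity
  have H : ∀ i : Fin d, ∃ g : EuclideanSpace ℝ (Fin d) → ℝ, ContDiff ℝ (⊤ : ℕ∞) g ∧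
      ∀ x ∈ closedBall (0:EuclideanSpace ℝ (Fin d)) 1, |g x - φ x i| < δ := by
    intro i
    have hcont : Continuous (fun x : (closedBall (0:EuclideanSpace ℝ (Fin d)) 1) => φ x i) :=
      (EuclideanSpace.proj i).continuous.comp hφ.restrict
    obtain ⟨⟨F, hFA⟩, hF⟩ := ContinuousMap.exists_mem_subalgebra_near_continuous_of_separatesPoints
      (smoothRestrict (closedBall 0 1)) (smoothRestrict_separates _) _ hcont δ hδ
    obtain ⟨g, hg, hgF⟩ := hFA
    refine ⟨g, hg, fun x hx => ?_⟩
    have := hF ⟨x, hx⟩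
    rw [hgF ⟨x, hx⟩] at this
    simpa [Real.norm_eq_abs, abs_sub_comm] using this
  choose G hG1 hG2 using H
  refine ⟨fun x => (EuclideanSpace.equiv (Fin d) ℝ).symm (fun i => G i x), ?_, ?_⟩
  · exact (EuclideanSpace.equiv (Fin d) ℝ).symm.contDiff.comp
      (contDiff_pi.2 fun i => hG1 i)
  · intro x hx
    have hcoord : ∀ i, |((EuclideanSpace.equiv (Fin d) ℝ).symm (fun i => G i x) - φ x) i| < δ := by
      intro i
      simpa using hG2 i x hx
    have h1 : ‖(EuclideanSpace.equiv (Fin d) ℝ).symm (fun i => G i x) - φ x‖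
        ≤ Real.sqrt (∑ _i : Fin d, δ ^ 2) := by
      rw [EuclideanSpace.norm_eq]
      apply Real.sqrt_le_sqrt
      apply Finset.sum_le_sum
      intro i _
      have := (hcoord i).le
      calc ‖((EuclideanSpace.equiv (Fin d) ℝ).symm (fun i => G i x) - φ x) i‖ ^ 2
          = |((EuclideanSpace.equiv (Fin d) ℝ).symm (fun i => G i x) - φ x) i| ^ 2 := by
            rw [Real.norm_eq_abs]
        _ ≤ δ ^ 2 := by nlinarith [abs_nonneg (((EuclideanSpace.equiv (Fin d) ℝ).symm (fun i => G i x) - φ x) i)]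
    refine lt_of_le_of_lt h1 ?_
    rw [Finset.sum_const, Finset.card_univ, Fintype.card_fin]
    have : (d : ℕ) • δ ^ 2 < ((d+1) * δ)^2 := by
      rw [nsmul_eq_mul]
      have : (d:ℝ) < (d+1)^2 := by nlinarith [Nat.cast_nonneg (α := ℝ) d]
      nlinarith
    calc Real.sqrt ((d:ℕ) • δ ^ 2) < Real.sqrt (((d+1) * δ)^2) := by
          apply Real.sqrt_lt_sqrt (by positivity) this
      _ = (d+1) * δ := by rw [Real.sqrt_sq (by positivity)]
      _ = ε := by rw [hδdef]; field_simp




lemma detPoly_natDegree_le {n : ℕ} (N : Matrix (Fin n) (Fin n) (Polynomial ℝ))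
    (hN : ∀ i j, (N i j).natDegree ≤ 1) : N.det.natDegree ≤ n := by
  rw [Matrix.det_apply']
  refine Polynomial.natDegree_sum_le_of_forall_le _ _ ?_
  intro σ _
  refine (Polynomial.natDegree_mul_le).trans ?_
  have h1 : (Polynomial.natDegree ((Equiv.Perm.sign σ : ℤ) : Polynomial ℝ)) = 0 := by
    rcases Int.units_eq_one_or (Equiv.Perm.sign σ) with hs | hs <;> rw [hs] <;> simp
  rw [h1, zero_add]
  refine (Polynomial.natDegree_prod_le _ _).trans ?_
  calc ∑ i : Fin n, (N (σ i) i).natDegree ≤ ∑ _i : Fin n, 1 :=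
        Finset.sum_le_sum fun i _ => hN (σ i) i
    _ = n := by simp

lemma eval_detPoly {n : ℕ} (M : Matrix (Fin n) (Fin n) ℝ) (t : ℝ) :
    Polynomial.eval t (Matrix.det (M.map (fun a => Polynomial.C a * Polynomial.X) + 1))
      = Matrix.det (1 + t • M) := by
  rw [← Polynomial.coe_evalRingHom, RingHom.map_det]
  congr 1
  ext i j
  simp only [RingHom.mapMatrix_apply, Matrix.map_apply, Matrix.add_apply, Matrix.one_apply,
    Matrix.smul_apply, Polynomial.coe_evalRingHom, Polynomial.eval_add, Polynomial.eval_mul,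
    Polynomial.eval_C, Polynomial.eval_X, Polynomial.eval_one, smul_eq_mul]
  split_ifs <;> simp <;> ring

lemma no_smooth_retraction (hd : 0 < d)
    (g : EuclideanSpace ℝ (Fin d) → EuclideanSpace ℝ (Fin d))
    (U : Set (EuclideanSpace ℝ (Fin d))) (hU : IsOpen U) (hBU : closedBall 0 1 ⊆ U)
    (hg : ContDiffOn ℝ (⊤ : ℕ∞) g U)
    (hgS : ∀ x ∈ closedBall (0:EuclideanSpace ℝ (Fin d)) 1, ‖g x‖ = 1)
    (hgid : ∀ x : EuclideanSpace ℝ (Fin d), ‖x‖ = 1 → g x = x) : False := by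
  haveI : Nonempty (Fin d) := Fin.pos_iff_nonempty.1 hd
  haveI : Nontrivial (EuclideanSpace ℝ (Fin d)) := by
    refine ⟨0, EuclideanSpace.single ⟨0, hd⟩ 1, fun hc => ?_⟩
    have := congrArg (fun v : E => v ⟨0, hd⟩) hc.symm
    simp [EuclideanSpace.single_apply] at this
  set B : Set E := closedBall 0 1 with hBdef
  have hBmeas : MeasurableSet B := measurableSet_closedBall
  have hBcompact : IsCompact B := isCompact_closedBall _ _
  have hBconv : Convex ℝ B := convex_closedBall _ _
  have h0B : (0:E) ∈ B := mem_closedBall_self zero_le_one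
  -- h = g - id and its derivative
  set h : E → E := fun x => g x - x with hhdef
  have hgdiff : ∀ x ∈ U, ContDiffAt ℝ (⊤ : ℕ∞) g x := fun x hx => hg.contDiffAt (hU.mem_nhds hx)
  set A : E → E →L[ℝ] E := fun x => fderiv ℝ g x - ContinuousLinearMap.id ℝ E with hAdef
  have hDg : ∀ x ∈ U, HasFDerivAt g (fderiv ℝ g x) x := fun x hx =>
    ((hgdiff x hx).differentiableAt (by simp)).hasFDerivAt
  have hder : ∀ x ∈ U, HasFDerivAt h (A x) x := fun x hx =>
    (hDg x hx).sub (hasFDerivAt_id x)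
  have hAcont : ContinuousOn A U :=
    (hg.continuousOn_fderiv_of_isOpen hU (mod_cast le_top)).sub continuousOn_const
  have hhcont : ContinuousOn h U := (hg.sub contDiffOn_id).continuousOn
  -- bound on the derivative
  obtain ⟨M0, hM0⟩ := hBcompact.exists_bound_of_continuousOn (hAcont.mono hBU)
  set M := max M0 0 with hMdef
  have hM : ∀ x ∈ B, ‖A x‖ ≤ M := fun x hx => (hM0 x hx).trans (le_max_left _ _)
  have hMnn : 0 ≤ M := le_max_right _ _
  have hlip : ∀ x ∈ B, ∀ y ∈ B, ‖h y - h x‖ ≤ M * ‖y - x‖ := fun x hx y hy =>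
    hBconv.norm_image_sub_le_of_norm_hasFDerivWithin_le
      (fun z hz => (hder z (hBU hz)).hasFDerivWithinAt) hM hx hy
  set τ := 1 / (2 * (M + 1)) with hτdef
  have hτpos : 0 < τ := by positivity
  have hτM : τ * M ≤ 1/2 := by
    rw [hτdef, div_mul_eq_mul_div, one_mul]
    rw [div_le_div_iff₀ (by positivity) (by norm_num)]
    nlinarith
  have hτle : τ ≤ 1/2 := by
    rw [hτdef]
    rw [div_le_div_iff₀ (by positivity) (by norm_num)]
    nlinarith
  -- the deformation G t
  set G : ℝ → E → E := fun t x => x + t • h x with hGdef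
  have hGder : ∀ (t : ℝ) (x), x ∈ U → HasFDerivAt (G t) (1 + t • A x) x := by
    intro t x hx
    have := (hasFDerivAt_id x).add ((hder x hx).const_smul t)
    exact this
  -- positivity of determinants
  have hdetpos : ∀ t : ℝ, 0 ≤ t → t ≤ τ → ∀ x ∈ B, 0 < (1 + t • A x).det := by
    intro t ht0 htτ x hx
    have hnz : ∀ s ∈ Icc (0:ℝ) t, (1 + s • A x).det ≠ 0 := by
      intro s hs
      have hinj : Function.Injective (1 + s • A x : E →L[ℝ] E) := by
        intro v w hvw
        have hvw' : (v - w) + s • A x (v - w) = 0 := by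
          have : v + s • A x v = w + s • A x w := by
            simpa [ContinuousLinearMap.one_def] using hvw
          simp only [map_sub, smul_sub]
          abel_nf
          linear_combination (norm := module) this
        have hnorm : ‖v - w‖ ≤ s * M * ‖v - w‖ := by
          have h1 : v - w = -(s • A x (v - w)) := by
            rw [eq_neg_iff_add_eq_zero]; exact hvw'
          calc ‖v - w‖ = ‖s • A x (v - w)‖ := by
                conv_lhs => rw [h1]
                rw [norm_neg]
            _ = s * ‖A x (v - w)‖ := by
                rw [norm_smul, Real.norm_eq_abs, abs_of_nonneg hs.1]
            _ ≤ s * (M * ‖v - w‖) := by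
                apply mul_le_mul_of_nonneg_left _ hs.1
                exact ((A x).le_opNorm _).trans
                  (mul_le_mul_of_nonneg_right (hM x hx) (norm_nonneg _))
            _ = s * M * ‖v - w‖ := by ring
        have hsM : s * M ≤ 1/2 := by
          calc s * M ≤ τ * M := mul_le_mul_of_nonneg_right (hs.2.trans htτ) hMnn
            _ ≤ 1/2 := hτM
        have : ‖v - w‖ ≤ (1/2) * ‖v - w‖ := by
          refine hnorm.trans ?_
          exact mul_le_mul_of_nonneg_right hsM (norm_nonneg _)
        have : ‖v - w‖ = 0 := by nlinarith [norm_nonneg (v - w)]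
        rwa [norm_sub_eq_zero_iff] at this
      intro hdet
      have hbot := LinearMap.bot_lt_ker_of_det_eq_zero (R := ℝ)
        (f := ((1 + s • A x : E →L[ℝ] E) : E →ₗ[ℝ] E)) hdet
      obtain ⟨v, hv, hvne⟩ := SetLike.exists_of_lt hbot
      rw [LinearMap.mem_ker] at hv
      simp only [Submodule.mem_bot] at hvne
      exact hvne (by simpa using hinj (a₂ := 0) (by simpa using hv))
    have hcont : ContinuousOn (fun s : ℝ => (1 + s • A x).det) (Icc 0 t) := by
      apply Continuous.continuousOn
      exact ContinuousLinearMap.continuous_det.comp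
        (continuous_const.add (continuous_id.smul continuous_const))
    have h1 : (fun s : ℝ => (1 + s • A x).det) 0 = 1 := by
      show (1 + (0:ℝ) • A x : E →L[ℝ] E).det = 1
      have hz : (1 + (0:ℝ) • A x : E →L[ℝ] E) = 1 := by ext v; simp
      rw [hz]
      show LinearMap.det _ = 1
      rw [ContinuousLinearMap.one_def, ContinuousLinearMap.coe_id, LinearMap.det_id]
    rcases lt_or_ge 0 ((1 + t • A x).det) with hpos | hneg
    · exact hpos
    · exfalso
      have : (0:ℝ) ∈ Icc ((fun s : ℝ => (1 + s • A x).det) t) ((fun s : ℝ => (1 + s • A x).det) 0) := by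
        constructor
        · exact hneg
        · rw [h1]; norm_num
      obtain ⟨s, hs, hs0⟩ := intermediate_value_Icc' ht0 hcont this
      exact hnz s hs hs0
  -- continuity of G t on B
  have hGcont : ∀ t : ℝ, ContinuousOn (G t) B :=
    fun t => continuousOn_id.add ((hhcont.mono hBU).const_smul t)
  -- injectivity
  have hinj : ∀ t : ℝ, 0 ≤ t → t ≤ τ → Set.InjOn (G t) B := by
    intro t ht0 htτ x hx y hy hxy
    have hxy' : x - y = t • (h y - h x) := by
      have hh : x + t • h x = y + t • h y := hxy
      linear_combination (norm := module) hh
    have hb : ‖x - y‖ ≤ (1/2) * ‖x - y‖ := by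
      have htM : t * M ≤ 1/2 := (mul_le_mul_of_nonneg_right htτ hMnn).trans hτM
      calc ‖x - y‖ = t * ‖h y - h x‖ := by
            rw [hxy', norm_smul, Real.norm_eq_abs, abs_of_nonneg ht0]
        _ ≤ t * (M * ‖y - x‖) := mul_le_mul_of_nonneg_left (hlip x hx y hy) ht0
        _ = t * M * ‖x - y‖ := by rw [norm_sub_rev]; ring
        _ ≤ (1/2) * ‖x - y‖ := mul_le_mul_of_nonneg_right htM (norm_nonneg _)
    have : ‖x - y‖ = 0 := by nlinarith [norm_nonneg (x - y)]
    rwa [norm_sub_eq_zero_iff] at this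
  -- G t maps B to B
  have hmaps : ∀ t : ℝ, 0 ≤ t → t ≤ 1 → ∀ x ∈ B, G t x ∈ B := by
    intro t ht0 ht1 x hx
    have hxn : ‖x‖ ≤ 1 := mem_closedBall_zero_iff.1 hx
    have hGeq : G t x = (1 - t) • x + t • g x := by
      show x + t • (g x - x) = _
      module
    rw [mem_closedBall_zero_iff, hGeq]
    calc ‖(1-t) • x + t • g x‖ ≤ ‖(1-t) • x‖ + ‖t • g x‖ := norm_add_le _ _
      _ = (1-t) * ‖x‖ + t * ‖g x‖ := by
          rw [norm_smul, norm_smul, Real.norm_eq_abs, Real.norm_eq_abs,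
            abs_of_nonneg (by linarith), abs_of_nonneg ht0]
      _ ≤ 1 := by
          rw [hgS x hx]
          have h2 : (1-t) * ‖x‖ ≤ (1-t) * 1 := mul_le_mul_of_nonneg_left hxn (by linarith)
          linarith
  -- surjectivity onto the open ball
  have hsurj : ∀ t : ℝ, 0 < t → t ≤ τ → ball (0:E) 1 ⊆ G t '' B := by
    intro t ht0 htτ
    set K := G t '' B with hKdef
    have hKclosed : IsClosed K := (hBcompact.image_of_continuousOn (hGcont t)).isClosed
    have hopen : ∀ y ∈ ball (0:E) 1, y ∈ K → K ∈ nhds y := by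
      intro y hy hyK
      obtain ⟨x, hxB, hxy⟩ := hyK
      have hxball : x ∈ ball (0:E) 1 := by
        rcases lt_or_eq_of_le (mem_closedBall_zero_iff.1 hxB) with hlt | heq
        · exact mem_ball_zero_iff.2 hlt
        · exfalso
          have hhx : h x = 0 := by
            show g x - x = 0
            rw [hgid x heq, sub_self]
          have hGx : G t x = x := by
            show x + t • h x = x
            rw [hhx, smul_zero, add_zero]
          rw [← hxy, hGx, mem_ball_zero_iff, heq] at hy
          exact lt_irrefl _ hy
      have hxU : x ∈ U := hBU hxB
      have hdet : ((1 + t • A x : E →L[ℝ] E) : E →ₗ[ℝ] E).det ≠ 0 :=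
        ne_of_gt (hdetpos t ht0.le htτ x hxB)
      set e := (LinearMap.equivOfDetNeZero ((1 + t • A x : E →L[ℝ] E) : E →ₗ[ℝ] E)
        hdet).toContinuousLinearEquiv with hedef
      have hecoe : (e : E →L[ℝ] E) = 1 + t • A x := by ext v; rfl
      have hstrict : HasStrictFDerivAt (G t) (e : E →L[ℝ] E) x := by
        rw [hecoe]
        have hCD : ContDiffAt ℝ (⊤ : ℕ∞) (G t) x :=
          contDiffAt_id.add (((hgdiff x hxU).sub contDiffAt_id).const_smul t)
        have hst := hCD.hasStrictFDerivAt (by simp)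
        rwa [(hGder t x hxU).fderiv] at hst
      have hmap := hstrict.map_nhds_eq_of_equiv
      rw [hxy] at hmap
      rw [← hmap]
      exact Filter.image_mem_map
        (Filter.mem_of_superset (isOpen_ball.mem_nhds hxball) ball_subset_closedBall)
    intro y hy
    by_contra hyK
    have hG0 : G t 0 ∈ ball (0:E) 1 := by
      rw [mem_ball_zero_iff]
      show ‖(0:E) + t • h 0‖ < 1
      have hh0 : ‖h 0‖ = 1 := by
        show ‖g 0 - 0‖ = 1
        rw [sub_zero]; exact hgS 0 h0B
      rw [zero_add, norm_smul, Real.norm_eq_abs, abs_of_nonneg ht0.le, hh0, mul_one]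
      linarith
    have hne1 : (ball (0:E) 1 ∩ interior K).Nonempty :=
      ⟨G t 0, hG0, mem_interior_iff_mem_nhds.2 (hopen _ hG0 ⟨0, h0B, rfl⟩)⟩
    have hne2 : (ball (0:E) 1 ∩ Kᶜ).Nonempty := ⟨y, hy, hyK⟩
    have cover : ball (0:E) 1 ⊆ interior K ∪ Kᶜ := by
      intro z hz
      by_cases hzK : z ∈ K
      · exact Or.inl (mem_interior_iff_mem_nhds.2 (hopen z hz hzK))
      · exact Or.inr hzK
    obtain ⟨z, hz, hz1, hz2⟩ := (convex_ball (0:E) 1).isPreconnected _ _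
      isOpen_interior hKclosed.isOpen_compl cover hne1 hne2
    exact hz2 (interior_subset hz1)
  -- measure of the image
  have hmeasK : ∀ t : ℝ, 0 < t → t ≤ τ → volume (G t '' B) = volume B := by
    intro t ht0 htτ
    apply le_antisymm
    · apply measure_mono
      rintro y ⟨x, hx, rfl⟩
      exact hmaps t ht0.le (by linarith) x hx
    · calc volume B = volume (ball (0:E) 1) :=
            Measure.addHaar_closedBall_eq_addHaar_ball volume (0:E) 1
        _ ≤ volume (G t '' B) := measure_mono (hsurj t ht0 htτ)
  -- change of variables
  have star : ∀ t : ℝ, 0 < t → t ≤ τ →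
      ∫ x in B, (1 + t • A x).det ∂volume = (volume B).toReal := by
    intro t ht0 htτ
    have hfd : ∀ x ∈ B, HasFDerivWithinAt (G t) (1 + t • A x) B x :=
      fun x hx => (hGder t x (hBU hx)).hasFDerivWithinAt
    have hcv := integral_image_eq_integral_abs_det_fderiv_smul volume hBmeas hfd
      (hinj t ht0.le htτ) (fun _ => (1:ℝ))
    simp only [smul_eq_mul, mul_one] at hcv
    rw [setIntegral_const, smul_eq_mul, mul_one, measureReal_def, hmeasK t ht0 htτ] at hcv
    rw [hcv]
    apply setIntegral_congr_fun hBmeas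
    intro x hx
    exact (abs_of_pos (hdetpos t ht0.le htτ x hx)).symm
  -- matrix representation and polynomiality in t
  set bE : Module.Basis (Fin d) ℝ E := (EuclideanSpace.basisFun (Fin d) ℝ).toBasis with hbE
  have hdetmat : ∀ (T : E →L[ℝ] E) (t : ℝ), (1 + t • T).det
      = Matrix.det (1 + t • LinearMap.toMatrix bE bE (T : E →ₗ[ℝ] E)) := by
    intro T t
    show LinearMap.det _ = _
    rw [← LinearMap.det_toMatrix bE]
    congr 1
    have hco : ((1 + t • T : E →L[ℝ] E) : E →ₗ[ℝ] E)
        = LinearMap.id + t • (T : E →ₗ[ℝ] E) := by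
      ext v; simp
    rw [hco, map_add, _root_.map_smul, LinearMap.toMatrix_id]
  set P : E → Polynomial ℝ := fun x =>
    Matrix.det ((LinearMap.toMatrix bE bE ((A x : E →L[ℝ] E) : E →ₗ[ℝ] E)).map
      (fun a => C a * X) + 1) with hPdef
  have hPeval : ∀ (x : E) (t : ℝ), eval t (P x) = (1 + t • A x).det := by
    intro x t
    rw [hdetmat, hPdef]
    exact eval_detPoly _ t
  have hPdeg : ∀ x : E, (P x).natDegree ≤ d := by
    intro x
    rw [hPdef]
    apply detPoly_natDegree_le
    intro i j
    simp only [Matrix.add_apply, Matrix.map_apply, Matrix.one_apply]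
    refine (Polynomial.natDegree_add_le _ _).trans ?_
    simp only [max_le_iff]
    constructor
    · exact (Polynomial.natDegree_mul_le).trans (by simp)
    · split_ifs <;> simp
  -- Lagrange interpolation nodes
  set nodes : Finset ℝ := (Finset.range (d+1)).image (fun n : ℕ => (n:ℝ)) with hnodes
  have hnodesinj : Set.InjOn id (nodes : Set ℝ) := Set.injOn_id _
  have hcard : nodes.card = d + 1 := by
    rw [hnodes, Finset.card_image_of_injective _ Nat.cast_injective, Finset.card_range]
  have hinterp : ∀ x : E, P x = Lagrange.interpolate nodes id (fun r => eval r (P x)) := by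
    intro x
    have hdeg : (P x).degree < nodes.card := by
      rw [hcard]
      exact lt_of_le_of_lt degree_le_natDegree (by exact_mod_cast Nat.lt_succ_of_le (hPdeg x))
    exact Lagrange.eq_interpolate hnodesinj hdeg
  have key : ∀ (x : E) (t : ℝ), (1 + t • A x).det
      = ∑ j ∈ nodes, (1 + j • A x).det * eval t (Lagrange.basis nodes id j) := by
    intro x t
    rw [← hPeval x t]
    conv_lhs => rw [hinterp x]
    rw [Lagrange.interpolate_apply, Polynomial.eval_finset_sum]
    refine Finset.sum_congr rfl fun j hj => ?_
    rw [eval_mul, eval_C, hPeval]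
  -- integrability
  have hbcont : ∀ j : ℝ, ContinuousOn (fun x => (1 + j • A x).det) B := fun j =>
    ContinuousLinearMap.continuous_det.comp_continuousOn
      (continuousOn_const.add ((hAcont.mono hBU).const_smul j))
  have hbint : ∀ j : ℝ, IntegrableOn (fun x => (1 + j • A x).det) B volume := fun j =>
    (hbcont j).integrableOn_compact hBcompact
  -- the global polynomial identity
  set q : Polynomial ℝ := (∑ j ∈ nodes,
      C (∫ x in B, (1 + j • A x).det ∂volume) * Lagrange.basis nodes id j)
      - C ((volume B).toReal) with hqdef
  have hqeval : ∀ t : ℝ, eval t q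
      = (∫ x in B, (1 + t • A x).det ∂volume) - (volume B).toReal := by
    intro t
    rw [hqdef, eval_sub, eval_C, Polynomial.eval_finset_sum]
    congr 1
    have hrw : ∫ x in B, (1 + t • A x).det ∂volume
        = ∫ x in B, (∑ j ∈ nodes, (1 + j • A x).det * eval t (Lagrange.basis nodes id j)) ∂volume :=
      setIntegral_congr_fun hBmeas fun x _ => key x t
    rw [hrw, integral_finset_sum]
    · exact (Finset.sum_congr rfl fun j hj => by
        rw [eval_mul, eval_C, ← integral_mul_const]).symm
    · intro j _
      exact ((hbint j).mul_const _)
  have hq0 : q = 0 := by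
    apply Polynomial.eq_zero_of_infinite_isRoot
    apply Set.Infinite.mono ?_ (Set.Ioc_infinite hτpos)
    intro t ht
    show q.IsRoot t
    rw [IsRoot, hqeval, star t ht.1 ht.2, sub_self]
  have heval1 : ∫ x in B, (1 + (1:ℝ) • A x).det ∂volume = (volume B).toReal := by
    have h1 := hqeval 1
    rw [hq0, eval_zero] at h1
    linarith [h1]
  -- the determinant of Dg vanishes on the open ball
  have hdet0 : ∀ x ∈ ball (0:E) 1, (fderiv ℝ g x).det = 0 := by
    intro x hx
    have hxU : x ∈ U := hBU (ball_subset_closedBall hx)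
    by_contra hne
    obtain ⟨v, hv⟩ : ∃ v, fderiv ℝ g x v = g x :=
      (LinearMap.equivOfDetNeZero ((fderiv ℝ g x : E →L[ℝ] E) : E →ₗ[ℝ] E) hne).surjective (g x)
    have hψ := (hDg x hxU).inner ℝ (hDg x hxU)
    have hconst : (fun y => @inner ℝ _ _ (g y) (g y)) =ᶠ[nhds x] (fun _ => (1:ℝ)) := by
      filter_upwards [isOpen_ball.mem_nhds hx] with y hy
      have : ‖g y‖ = 1 := hgS y (ball_subset_closedBall hy)
      rw [real_inner_self_eq_norm_mul_norm, this, mul_one]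
    have hzero : HasFDerivAt (fun y => @inner ℝ _ _ (g y) (g y)) 0 x :=
      (hasFDerivAt_const (𝕜 := ℝ) (1:ℝ) x).congr_of_eventuallyEq hconst
    have huniq := hψ.unique hzero
    have happ := ContinuousLinearMap.ext_iff.1 huniq v
    rw [ContinuousLinearMap.comp_apply, fderivInnerCLM_apply] at happ
    simp only [ContinuousLinearMap.prod_apply, ContinuousLinearMap.zero_apply] at happ
    rw [hv, real_inner_self_eq_norm_mul_norm, hgS x (ball_subset_closedBall hx)] at happ
    norm_num at happ
  -- conclusion
  have hfinal : ∫ x in B, (1 + (1:ℝ) • A x).det ∂volume = 0 := by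
    have hae : B =ᵐ[volume] (ball (0:E) 1 : Set E) := by
      rw [Filter.eventuallyEq_set]
      have hsph := (measure_eq_zero_iff_ae_notMem (μ := volume) (s := sphere (0:E) 1)).1
        (Measure.addHaar_sphere volume 0 1)
      filter_upwards [hsph] with y hy
      · constructor
        · intro hyB
          rcases lt_or_eq_of_le (mem_closedBall_zero_iff.1 hyB) with hlt | heq
          · exact mem_ball_zero_iff.2 hlt
          · exact absurd (mem_sphere_zero_iff_norm.2 heq) hy
        · exact fun hyb => ball_subset_closedBall hyb
    rw [setIntegral_congr_set hae]
    rw [setIntegral_congr_fun measurableSet_ball (g := fun _ => (0:ℝ))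
      (fun x hx => by
        have h1A : (1 + (1:ℝ) • A x : E →L[ℝ] E) = fderiv ℝ g x := by
          ext v
          simp [hAdef, ContinuousLinearMap.one_def]
        rw [h1A]
        exact hdet0 x hx)]
    simp
  have hvolpos : 0 < volume B := measure_closedBall_pos _ _ one_pos
  have hvolfin : volume B < ⊤ := hBcompact.measure_lt_top
  have htR : 0 < (volume B).toReal := ENNReal.toReal_pos hvolpos.ne' hvolfin.ne
  rw [heval1] at hfinal
  linarith

lemma brouwer (φ : EuclideanSpace ℝ (Fin d) → EuclideanSpace ℝ (Fin d))
    (hφ : ContinuousOn φ (closedBall 0 1))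
    (hmaps : ∀ x ∈ closedBall (0:EuclideanSpace ℝ (Fin d)) 1,
      φ x ∈ closedBall (0:EuclideanSpace ℝ (Fin d)) 1) :
    ∃ x ∈ closedBall (0:EuclideanSpace ℝ (Fin d)) 1, φ x = x := by
  rcases Nat.eq_zero_or_pos d with hd | hd
  · refine ⟨0, mem_closedBall_self zero_le_one, ?_⟩
    subst hd
    exact Subsingleton.elim _ _
  by_contra hfix
  push_neg at hfix
  set B : Set E := closedBall 0 1 with hBdef
  have hBcompact : IsCompact B := isCompact_closedBall _ _
  have h0B : (0:E) ∈ B := mem_closedBall_self zero_le_one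
  have hcont : ContinuousOn (fun x => ‖φ x - x‖) B := (hφ.sub continuousOn_id).norm
  obtain ⟨x₀, hx₀B, hx₀⟩ := hBcompact.exists_isMinOn ⟨0, h0B⟩ hcont
  set ε := ‖φ x₀ - x₀‖ with hεdef
  have hεpos : 0 < ε := by
    rw [hεdef, norm_pos_iff, sub_ne_zero]
    exact hfix x₀ hx₀B
  have hεmin : ∀ x ∈ B, ε ≤ ‖φ x - x‖ := fun x hx => hx₀ hx
  -- smooth approximation q mapping B to B, with no fixed point
  obtain ⟨p, hp, hpε⟩ := smooth_approx φ hφ (show 0 < ε/4 by linarith)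
  set c : ℝ := (1 + ε/4)⁻¹ with hcdef
  have hc0 : 0 < c := by rw [hcdef]; positivity
  have hc1 : c ≤ 1 := by
    rw [hcdef]
    rw [inv_le_one_iff₀]
    right; linarith
  set q : EuclideanSpace ℝ (Fin d) → EuclideanSpace ℝ (Fin d) := fun x => c • p x with hqdef
  have hq : ContDiff ℝ (⊤ : ℕ∞) q := hp.const_smul c
  have hpbound : ∀ x ∈ B, ‖p x‖ ≤ 1 + ε/4 := by
    intro x hx
    calc ‖p x‖ ≤ ‖φ x‖ + ‖p x - φ x‖ := by
          have := norm_add_le (φ x) (p x - φ x)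
          simpa using this
      _ ≤ 1 + ε/4 := add_le_add (mem_closedBall_zero_iff.1 (hmaps x hx)) (hpε x hx).le
  have hqB : ∀ x ∈ B, ‖q x‖ ≤ 1 := by
    intro x hx
    rw [hqdef]
    simp only [norm_smul, Real.norm_eq_abs, abs_of_pos hc0]
    calc c * ‖p x‖ ≤ c * (1 + ε/4) := mul_le_mul_of_nonneg_left (hpbound x hx) hc0.le
      _ = 1 := by rw [hcdef]; field_simp
  have hqφ : ∀ x ∈ B, ‖q x - φ x‖ < ε/2 := by
    intro x hx
    have h1 : ‖q x - p x‖ ≤ ε/4 := by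
      rw [hqdef]
      have : c • p x - p x = -((1 - c) • p x) := by module
      rw [this, norm_neg, norm_smul, Real.norm_eq_abs, abs_of_nonneg (by linarith)]
      calc (1 - c) * ‖p x‖ ≤ (1 - c) * (1 + ε/4) :=
            mul_le_mul_of_nonneg_left (hpbound x hx) (by linarith)
        _ = ε/4 := by rw [hcdef]; field_simp; ring
    calc ‖q x - φ x‖ ≤ ‖q x - p x‖ + ‖p x - φ x‖ := norm_sub_le_norm_sub_add_norm_sub _ _ _
      _ < ε/4 + ε/4 := add_lt_add_of_le_of_lt h1 (hpε x hx)
      _ = ε/2 := by ring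
  have hqx : ∀ x ∈ B, ε/2 ≤ ‖x - q x‖ := by
    intro x hx
    have h2 := hqφ x hx
    have h3 := hεmin x hx
    have : ‖φ x - x‖ ≤ ‖φ x - q x‖ + ‖q x - x‖ := norm_sub_le_norm_sub_add_norm_sub _ _ _
    rw [norm_sub_rev (φ x) (q x)] at this
    rw [norm_sub_rev]
    linarith
  have hqxne : ∀ x ∈ B, x - q x ≠ 0 := by
    intro x hx hc'
    have := hqx x hx
    rw [hc', norm_zero] at this
    linarith
  -- the retraction data
  set u : EuclideanSpace ℝ (Fin d) → EuclideanSpace ℝ (Fin d) :=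
    fun x => ‖x - q x‖⁻¹ • (x - q x) with hudef
  set bf : EuclideanSpace ℝ (Fin d) → ℝ := fun x => @inner ℝ _ _ x (u x) with hbfdef
  set Δ : EuclideanSpace ℝ (Fin d) → ℝ := fun x => bf x ^ 2 + 1 - ‖x‖ ^ 2 with hΔdef
  set r : EuclideanSpace ℝ (Fin d) → EuclideanSpace ℝ (Fin d) :=
    fun x => x + (-bf x + Real.sqrt (Δ x)) • u x with hrdef
  have hunorm : ∀ x ∈ B, ‖u x‖ = 1 := by
    intro x hx
    rw [hudef]
    simp only [norm_smul, Real.norm_eq_abs, abs_of_nonneg (inv_nonneg.2 (norm_nonneg _))]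
    rw [inv_mul_cancel₀ (norm_ne_zero_iff.2 (hqxne x hx))]
  -- positivity of b on the sphere
  have hbpos : ∀ x ∈ B, ‖x‖ = 1 → 0 < bf x := by
    intro x hx hx1
    have hipq : @inner ℝ _ _ x (q x) < 1 := by
      by_contra hle
      push_neg at hle
      have hexp := @norm_sub_sq_real (EuclideanSpace ℝ (Fin d)) _ _ x (q x)
      have h1 : ‖q x‖ ≤ 1 := hqB x hx
      have h2 := hqx x hx
      nlinarith [norm_nonneg (q x)]
    have hinner : 0 < @inner ℝ _ _ x (x - q x) := by
      rw [inner_sub_right, real_inner_self_eq_norm_mul_norm, hx1]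
      linarith
    rw [hbfdef]
    simp only
    rw [hudef]
    simp only
    rw [real_inner_smul_right]
    exact mul_pos (inv_pos.2 (norm_pos_iff.2 (hqxne x hx))) hinner
  have hΔpos : ∀ x ∈ B, 0 < Δ x := by
    intro x hx
    rcases lt_or_eq_of_le (mem_closedBall_zero_iff.1 hx) with hlt | heq
    · rw [hΔdef]
      simp only
      nlinarith [sq_nonneg (bf x), norm_nonneg x]
    · rw [hΔdef]
      simp only
      rw [heq]
      have := hbpos x hx heq
      nlinarith
  -- domain of smoothness
  set W : Set (EuclideanSpace ℝ (Fin d)) := {x | x - q x ≠ 0} with hWdef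
  have hWopen : IsOpen W := by
    have : W = (fun x => x - q x) ⁻¹' {y | y ≠ 0} := rfl
    rw [this]
    exact IsOpen.preimage (continuous_id.sub hq.continuous) isOpen_ne
  have hucont : ContinuousOn u W := by
    refine ContinuousOn.smul (f := fun x => ‖x - q x‖⁻¹) (g := fun x => x - q x) ?_ ?_
    · exact ((continuous_id.sub hq.continuous).norm.continuousOn).inv₀
        (fun x hx => norm_ne_zero_iff.2 hx)
    · exact (continuous_id.sub hq.continuous).continuousOn
  have hΔcont : ContinuousOn Δ W := by
    apply ContinuousOn.sub
    apply ContinuousOn.add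
    · exact (continuousOn_id.inner hucont).pow 2
    · exact continuousOn_const
    · exact (continuous_norm.continuousOn).pow 2
  set V : Set (EuclideanSpace ℝ (Fin d)) := W ∩ Δ ⁻¹' (Ioi 0) with hVdef
  have hVopen : IsOpen V := hΔcont.isOpen_inter_preimage hWopen isOpen_Ioi
  have hBV : B ⊆ V := fun x hx => ⟨hqxne x hx, hΔpos x hx⟩
  -- smoothness of r on V
  have hrsmooth : ContDiffOn ℝ (⊤ : ℕ∞) r V := by
    intro x hxV
    apply ContDiffAt.contDiffWithinAt
    obtain ⟨hxW, hxΔ⟩ := hxV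
    have hsub : ContDiffAt ℝ (⊤ : ℕ∞) (fun y => y - q y) x := contDiffAt_id.sub hq.contDiffAt
    have hnorm : ContDiffAt ℝ (⊤ : ℕ∞) (fun y => ‖y - q y‖) x := hsub.norm ℝ hxW
    have hinv : ContDiffAt ℝ (⊤ : ℕ∞) (fun y => ‖y - q y‖⁻¹) x :=
      hnorm.inv (norm_ne_zero_iff.2 hxW)
    have hu : ContDiffAt ℝ (⊤ : ℕ∞) u x := hinv.smul hsub
    have hb : ContDiffAt ℝ (⊤ : ℕ∞) bf x := contDiffAt_id.inner ℝ hu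
    have hΔ' : ContDiffAt ℝ (⊤ : ℕ∞) Δ x := by
      have hn2 : ContDiffAt ℝ (⊤ : ℕ∞) (fun y : EuclideanSpace ℝ (Fin d) => ‖y‖ ^ 2) x := by
        have : (fun y : EuclideanSpace ℝ (Fin d) => ‖y‖ ^ 2)
            = fun y : EuclideanSpace ℝ (Fin d) => @inner ℝ _ _ y y := by
          ext y; rw [real_inner_self_eq_norm_sq]
        rw [this]
        exact contDiffAt_id.inner ℝ contDiffAt_id
      exact ((hb.pow 2).add contDiffAt_const).sub hn2
    have hsqrt : ContDiffAt ℝ (⊤ : ℕ∞) (fun y => Real.sqrt (Δ y)) x :=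
      hΔ'.sqrt (ne_of_gt (mem_preimage.1 hxΔ))
    exact contDiffAt_id.add (((hb.neg).add hsqrt).smul hu)
  -- r maps B to the sphere
  have hrS : ∀ x ∈ B, ‖r x‖ = 1 := by
    intro x hx
    have hΔx := hΔpos x hx
    set t := -bf x + Real.sqrt (Δ x) with htdef
    have hsq : Real.sqrt (Δ x) ^ 2 = Δ x := Real.sq_sqrt hΔx.le
    have hnormsq : ‖r x‖ ^ 2 = 1 := by
      rw [hrdef]
      simp only
      rw [← htdef, norm_add_sq_real, real_inner_smul_right, norm_smul, Real.norm_eq_abs]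
      have hu1 : ‖u x‖ = 1 := hunorm x hx
      rw [hu1, mul_one]
      have hb' : @inner ℝ _ _ x (u x) = bf x := rfl
      rw [hb']
      have ht2 : t ^ 2 + 2 * (bf x * t) = 1 - ‖x‖^2 := by
        rw [htdef]
        have : (-bf x + Real.sqrt (Δ x)) ^ 2 + 2 * (bf x * (-bf x + Real.sqrt (Δ x)))
            = Real.sqrt (Δ x) ^ 2 - bf x ^ 2 := by ring
        rw [this, hsq, hΔdef]
        ring
      have habs : |t| ^ 2 = t ^ 2 := sq_abs t
      nlinarith [habs, ht2]
    nlinarith [norm_nonneg (r x), hnormsq]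
  -- r is the identity on the sphere
  have hrid : ∀ x : EuclideanSpace ℝ (Fin d), ‖x‖ = 1 → r x = x := by
    intro x hx1
    have hxB : x ∈ B := by
      rw [hBdef, mem_closedBall_zero_iff, hx1]
    have hb := hbpos x hxB hx1
    have hΔb : Δ x = bf x ^ 2 := by
      rw [hΔdef]
      simp only
      rw [hx1]
      ring
    rw [hrdef]
    simp only
    rw [hΔb, Real.sqrt_sq hb.le]
    rw [neg_add_cancel, zero_smul, add_zero]
  exact no_smooth_retraction hd r V hVopen hBV hrsmooth hrS hrid

end BrouwerAux

theorem stmt9 (d : ℕ) (R : ℝ) (hR : 0 < R)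
    (f : EuclideanSpace ℝ (Fin d) → EuclideanSpace ℝ (Fin d))
    (hf : ContinuousOn f (Metric.closedBall 0 R))
    (hbd : ∀ x : EuclideanSpace ℝ (Fin d), ‖x‖ = R → f x = x) :
    ∃ x ∈ Metric.closedBall (0 : EuclideanSpace ℝ (Fin d)) R, f x = 0 := by
  by_contra hno
  push_neg at hno
  -- rescale to the unit ball
  set F : EuclideanSpace ℝ (Fin d) → EuclideanSpace ℝ (Fin d) :=
    fun y => R⁻¹ • f (R • y) with hFdef
  have hscale : ∀ y : EuclideanSpace ℝ (Fin d), y ∈ closedBall (0:EuclideanSpace ℝ (Fin d)) 1 →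
      R • y ∈ closedBall (0:EuclideanSpace ℝ (Fin d)) R := by
    intro y hy
    rw [mem_closedBall_zero_iff] at hy ⊢
    rw [norm_smul, Real.norm_eq_abs, abs_of_pos hR]
    calc R * ‖y‖ ≤ R * 1 := mul_le_mul_of_nonneg_left hy hR.le
      _ = R := mul_one R
  have hFcont : ContinuousOn F (closedBall 0 1) := by
    refine ContinuousOn.const_smul (g := fun y => f (R • y)) ?_ R⁻¹
    exact hf.comp (continuous_const_smul R).continuousOn hscale
  have hFne : ∀ y ∈ closedBall (0:EuclideanSpace ℝ (Fin d)) 1, F y ≠ 0 := by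
    intro y hy
    rw [hFdef]
    simp only
    exact smul_ne_zero (inv_ne_zero hR.ne') (hno (R • y) (hscale y hy))
  have hFid : ∀ y : EuclideanSpace ℝ (Fin d), ‖y‖ = 1 → F y = y := by
    intro y hy
    rw [hFdef]
    simp only
    rw [hbd (R • y) (by rw [norm_smul, Real.norm_eq_abs, abs_of_pos hR, hy, mul_one])]
    rw [smul_smul, inv_mul_cancel₀ hR.ne', one_smul]
  set φ : EuclideanSpace ℝ (Fin d) → EuclideanSpace ℝ (Fin d) :=
    fun y => -(‖F y‖⁻¹ • F y) with hφdef
  have hφcont : ContinuousOn φ (closedBall 0 1) := by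
    apply ContinuousOn.neg
    refine ContinuousOn.smul (f := fun y => ‖F y‖⁻¹) (g := F) ?_ ?_
    · exact (hFcont.norm).inv₀ (fun y hy => norm_ne_zero_iff.2 (hFne y hy))
    · exact hFcont
  have hφnorm : ∀ y ∈ closedBall (0:EuclideanSpace ℝ (Fin d)) 1, ‖φ y‖ = 1 := by
    intro y hy
    rw [hφdef]
    simp only [norm_neg, norm_smul, Real.norm_eq_abs,
      abs_of_nonneg (inv_nonneg.2 (norm_nonneg _))]
    rw [inv_mul_cancel₀ (norm_ne_zero_iff.2 (hFne y hy))]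
  have hφmaps : ∀ y ∈ closedBall (0:EuclideanSpace ℝ (Fin d)) 1,
      φ y ∈ closedBall (0:EuclideanSpace ℝ (Fin d)) 1 := by
    intro y hy
    rw [mem_closedBall_zero_iff, hφnorm y hy]
  obtain ⟨y, hyB, hyfix⟩ := brouwer φ hφcont hφmaps
  have hy1 : ‖y‖ = 1 := by rw [← hyfix]; exact hφnorm y hyB
  have hFy : F y = y := hFid y hy1
  rw [hφdef] at hyfix
  simp only at hyfix
  rw [hFy, hy1, inv_one, one_smul] at hyfix
  have hyy : y + y = 0 := add_eq_zero_iff_eq_neg.2 hyfix.symm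
  have hy0 : y = 0 := by
    have h2 : (2:ℝ) • y = 0 := by rw [two_smul]; exact hyy
    exact (smul_eq_zero.1 h2).resolve_left (by norm_num)
  rw [hy0, norm_zero] at hy1
  norm_num at hy1
end

section
/- Let c, z ∈ ℝ^d with ‖z − c‖ ≤ 1. Then z does not belong to the convex hull of the set B(c, 1) \ B(z, 1), i.e., z is not a convex combination of points that lie in the closed unit ball around c but at distance greater than 1 from z. -/
/-! Every point `x` of `B(c, r) \ B(z, r)` satisfies `⟪x - z, z - c⟫ < 0`, by expanding
`‖x - c‖² = ‖(x - z) + (z - c)‖²`. So the whole set lies in the open half-space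
`{x | ⟪z - c, x⟫ < ⟪z - c, z⟫}`, which is convex and does not contain `z`. -/

open Metric RealInnerProductSpace

section

variable {E : Type*} [NormedAddCommGroup E] [InnerProductSpace ℝ E]

theorem inner_sub_sub_neg_of_mem_closedBall_diff {c z x : E} {r : ℝ}
    (hx : x ∈ closedBall c r \ closedBall z r) : ⟪x - z, z - c⟫ < 0 := by
  obtain ⟨hxc, hxz⟩ := hx
  rw [mem_closedBall, dist_eq_norm] at hxc hxz
  have hexpand : ‖x - c‖ ^ 2 = ‖x - z‖ ^ 2 + 2 * ⟪x - z, z - c⟫ + ‖z - c‖ ^ 2 := by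
    rw [← norm_add_sq_real, sub_add_sub_cancel]
  have hr : 0 ≤ r := (norm_nonneg _).trans hxc
  have hxc_sq : ‖x - c‖ ^ 2 ≤ r ^ 2 := pow_le_pow_left₀ (norm_nonneg _) hxc 2
  have hxz_sq : r ^ 2 < ‖x - z‖ ^ 2 := pow_lt_pow_left₀ (not_le.mp hxz) hr two_ne_zero
  linarith [sq_nonneg ‖z - c‖]

theorem closedBall_diff_closedBall_subset_halfSpace (c z : E) (r : ℝ) :
    closedBall c r \ closedBall z r ⊆ {x | ⟪z - c, x⟫ < ⟪z - c, z⟫} := by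
  intro x hx
  have hneg := inner_sub_sub_neg_of_mem_closedBall_diff hx
  rw [real_inner_comm, inner_sub_right] at hneg
  exact sub_neg.mp hneg

theorem notMem_convexHull_closedBall_diff_closedBall (c z : E) (r : ℝ) :
    z ∉ convexHull ℝ (closedBall c r \ closedBall z r) := fun hz =>
  lt_irrefl ⟪z - c, z⟫ <| convexHull_min (closedBall_diff_closedBall_subset_halfSpace c z r)
    (convex_halfSpace_lt (innerₛₗ ℝ (z - c)).isLinear _) hz

end

theorem stmt13_general (d : ℕ) (c z : EuclideanSpace ℝ (Fin d)) :
    z ∉ convexHull ℝ (Metric.closedBall c 1 \ Metric.closedBall z 1) :=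
  notMem_convexHull_closedBall_diff_closedBall c z 1

theorem stmt13 (d : ℕ) (c z : EuclideanSpace ℝ (Fin d)) (hz : ‖z - c‖ ≤ 1) :
    z ∉ convexHull ℝ (Metric.closedBall c 1 \ Metric.closedBall z 1) :=
  stmt13_general d c z
end

section
/- Let n be a positive integer, s ∈ ℝ^d, and let X_1, …, X_n ⊆ ℝ^d be 1-dense sets. Suppose c_0, c_1, …, c_{n-1} ∈ ℝ^d satisfy c_0 = 0 and c_i ∈ conv(X_i ∩ B(c_{i−1} + s, 1)) for all 1 ≤ i ≤ n−1. Then every point y ∈ conv(X_n ∩ B(c_{n−1} + s, 1)) is s-reached in n steps: there exist p_0, p_1, …, p_n ∈ ℝ^d with p_0 = 0, p_n = y, p_i ∈ X_i for all 1 ≤ i ≤ n−1, and ‖(p_{i+1} − p_i) − s‖ ≤ √2 for all 0 ≤ i ≤ n−1. -/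
open scoped RealInnerProductSpace
open Metric Set

theorem exists_mem_norm_sub_le_sqrt_two_of_mem_convexHull {E : Type*} [NormedAddCommGroup E]
    [InnerProductSpace ℝ E] {S : Set E} {m q c : E} (hS : S ⊆ closedBall m 1)
    (hc : c ∈ convexHull ℝ S) (hq : ‖q - c‖ ≤ 1) : ∃ x ∈ S, ‖q - x‖ ≤ √2 := by
  obtain ⟨x, hxS, hx⟩ := ((innerₗ E (m - q)).concaveOn convex_univ).exists_le_of_mem_convexHull
    (subset_univ S) hc
  rw [innerₗ_apply_apply, innerₗ_apply_apply] at hx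
  have hxm : ‖x - m‖ ^ 2 ≤ 1 := pow_le_one₀ (norm_nonneg _) (mem_closedBall_iff_norm.mp (hS hxS))
  have hqc : ‖q - c‖ ^ 2 ≤ 1 := pow_le_one₀ (norm_nonneg _) hq
  have h_sq_diff : ‖q - x‖ ^ 2 - ‖q - c‖ ^ 2
      = ‖x - m‖ ^ 2 - ‖c - m‖ ^ 2 + 2 * (⟪m - q, x⟫ - ⟪m - q, c⟫) := by
    simp only [norm_sub_sq_real, inner_sub_left, real_inner_comm]; ring
  refine ⟨x, hxS, Real.le_sqrt_of_sq_le ?_⟩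
  linarith [sq_nonneg ‖c - m‖]

section Reach

variable {E : Type*} [SeminormedAddCommGroup E]

def IsReachedIn (X : ℕ → Set E) (s : E) (k : ℕ) (z : E) : Prop :=
  ∃ p : ℕ → E, p 0 = 0 ∧ p k = z ∧ (∀ i, 1 ≤ i → i < k → p i ∈ X i) ∧
    ∀ i < k, ‖(p (i + 1) - p i) - s‖ ≤ √2

variable {X : ℕ → Set E} {s : E}

theorem isReachedIn_zero : IsReachedIn X s 0 0 :=
  ⟨fun _ ↦ 0, rfl, rfl, fun _ _ h ↦ absurd h (Nat.not_lt_zero _),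
    fun _ h ↦ absurd h (Nat.not_lt_zero _)⟩

theorem IsReachedIn.snoc {k : ℕ} {x z : E} (h : IsReachedIn X s k x) (hx : 1 ≤ k → x ∈ X k)
    (hz : ‖(z - x) - s‖ ≤ √2) : IsReachedIn X s (k + 1) z := by
  obtain ⟨p, hp0, hpk, hpX, hpstep⟩ := h
  refine ⟨Function.update p (k + 1) z, ?_, Function.update_self .., ?_, ?_⟩
  · rw [Function.update_of_ne (by omega), hp0]
  · intro i hi hik
    rw [Function.update_of_ne (by omega)]
    rcases Nat.lt_succ_iff_lt_or_eq.mp hik with hik | rfl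
    · exact hpX i hi hik
    · rw [hpk]; exact hx hi
  · intro i hik
    rw [Function.update_of_ne (by omega : i ≠ k + 1)]
    rcases Nat.lt_succ_iff_lt_or_eq.mp hik with hik | rfl
    · rw [Function.update_of_ne (by omega)]; exact hpstep i hik
    · rw [Function.update_self, hpk]; exact hz

end Reach

theorem isReachedIn_of_mem_closedBall {E : Type*} [NormedAddCommGroup E] [InnerProductSpace ℝ E]
    {X : ℕ → Set E} {s : E} {c : ℕ → E} (hc0 : c 0 = 0) {k : ℕ} (hk : 1 ≤ k)
    (hc : ∀ i, 1 ≤ i → i < k → c i ∈ convexHull ℝ (X i ∩ closedBall (c (i - 1) + s) 1))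
    {z : E} (hz : z ∈ closedBall (c (k - 1) + s) 1) : IsReachedIn X s k z := by
  induction k, hk using Nat.le_induction generalizing z with
  | base =>
    rw [Nat.sub_self, hc0, zero_add, mem_closedBall_iff_norm] at hz
    refine isReachedIn_zero.snoc (fun h ↦ absurd h (Nat.lt_irrefl 0)) ?_
    rw [sub_zero]
    exact hz.trans (Real.one_le_sqrt.mpr one_le_two)
  | succ k hk ih =>
    rw [Nat.add_sub_cancel, mem_closedBall_iff_norm] at hz
    obtain ⟨x, ⟨hxX, hxball⟩, hx⟩ := exists_mem_norm_sub_le_sqrt_two_of_mem_convexHull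
      (q := z - s) inter_subset_right (hc k hk (Nat.lt_succ_self k))
      (by rwa [sub_sub, add_comm s])
    exact (ih (fun i hi hik ↦ hc i hi (by omega)) hxball).snoc (fun _ ↦ hxX)
      (by rwa [sub_right_comm])

theorem stmt14_general (d n : ℕ) (hn : 0 < n) (s : EuclideanSpace ℝ (Fin d))
    (X : ℕ → Set (EuclideanSpace ℝ (Fin d)))
    (c : ℕ → EuclideanSpace ℝ (Fin d)) (hc0 : c 0 = 0)
    (hc : ∀ i, 1 ≤ i → i ≤ n - 1 →
      c i ∈ convexHull ℝ (X i ∩ Metric.closedBall (c (i - 1) + s) 1))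
    (y : EuclideanSpace ℝ (Fin d))
    (hy : y ∈ convexHull ℝ (X n ∩ Metric.closedBall (c (n - 1) + s) 1)) :
    ∃ p : ℕ → EuclideanSpace ℝ (Fin d),
      p 0 = 0 ∧ p n = y ∧
      (∀ i, 1 ≤ i → i ≤ n - 1 → p i ∈ X i) ∧
      (∀ i, i ≤ n - 1 → ‖(p (i + 1) - p i) - s‖ ≤ Real.sqrt 2) := by
  have hy_ball : y ∈ closedBall (c (n - 1) + s) 1 :=
    convexHull_min inter_subset_right (convex_closedBall _ _) hy
  obtain ⟨p, hp0, hpn, hpX, hpstep⟩ :=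
    isReachedIn_of_mem_closedBall hc0 hn (fun i hi hin ↦ hc i hi (by omega)) hy_ball
  exact ⟨p, hp0, hpn, fun i hi hin ↦ hpX i hi (by omega), fun i hin ↦ hpstep i (by omega)⟩

theorem stmt14 (d n : ℕ) (hn : 0 < n) (s : EuclideanSpace ℝ (Fin d))
    (X : ℕ → Set (EuclideanSpace ℝ (Fin d)))
    (hX : ∀ i, 1 ≤ i → i ≤ n → IsOneDense (X i))
    (c : ℕ → EuclideanSpace ℝ (Fin d)) (hc0 : c 0 = 0)
    (hc : ∀ i, 1 ≤ i → i ≤ n - 1 →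
      c i ∈ convexHull ℝ (X i ∩ Metric.closedBall (c (i - 1) + s) 1))
    (y : EuclideanSpace ℝ (Fin d))
    (hy : y ∈ convexHull ℝ (X n ∩ Metric.closedBall (c (n - 1) + s) 1)) :
    ∃ p : ℕ → EuclideanSpace ℝ (Fin d),
      p 0 = 0 ∧ p n = y ∧
      (∀ i, 1 ≤ i → i ≤ n - 1 → p i ∈ X i) ∧
      (∀ i, i ≤ n - 1 → ‖(p (i + 1) - p i) - s‖ ≤ Real.sqrt 2) :=
  stmt14_general d n hn s X c hc0 hc y hy
end
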